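/- There is no map Δ : Ω → Ω⊠Ω of DB-algebras (i.e. preserving both gradings, the product ∘, the differential ∂, and the operators d_i) with Δ(e) = e⊠e that is simultaneously coassociative and symmetric (invariant under the signed flip τ). In fact, any symmetric such Δ must satisfy Δ(b) = B + ½A, and one computes (Δ⊠id)(B + ½A) ≠ (id⊠Δ)(B + ½A). -/

import Mathlib

/-
STATEMENT 15: There is no morphism of DB-algebras Δ : Ω → Ω⊠Ω with Δ(e) = e⊠e which is
simultaneously coassociative and symmetric (invariant under the signed flip τ).  In fact
any symmetric such Δ satisfies Δ(b) = B + ½A, and the coassociativity identity fails for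
B + ½A.  Here Ω is the Maurer-Cartan DB-algebra, realized as the span of the words in
{a,b,c} (0 = a, 1 = b, 2 = c) with product x∘y = x⋄c⋄y, differential ∂ the signed
derivation for ⋄ with ∂b = c−a, ∂a = ∂c = 0, and operators d_i inserting the letter a
at position i; Ω⊠Ω is the tensor DB-algebra with the Koszul-signed product.
A DB-morphism preserves the bigrading, ∘, ∂ and the dᵢ's.
-/

noncomputable section

abbrev Word := FreeMonoid (Fin 3)
abbrev Om : Type := MonoidAlgebra ℝ Word
abbrev P2 : Type := (Word × Word) →₀ ℝ
abbrev T3 : Type := (Word × Word × Word) →₀ ℝ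

def W (w : Word) : Om := MonoidAlgebra.single w 1
def W2 (w w' : Word) : P2 := Finsupp.single (w, w') 1

def aW : Word := FreeMonoid.of 0
def bW : Word := FreeMonoid.of 1
def cW : Word := FreeMonoid.of 2

def bcount (w : Word) : ℕ := (FreeMonoid.toList w).count 1

/-- the Koszul-signed product ⋄ on Ω⊠Ω. -/
def tmul (f g : P2) : P2 :=
  f.sum fun p r => g.sum fun q s =>
    Finsupp.single (p.1 * q.1, p.2 * q.2)
      (r * s * ((-1 : ℝ) ^ (bcount p.2 * bcount q.1)))

/-- d_i on Ω: insertion of the letter a at position i. -/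
def diOm (i : ℕ) : Om →ₗ[ℝ] Om :=
  MonoidAlgebra.mapDomainLinearMap ℝ ℝ
    (fun w : Word => FreeMonoid.ofList ((FreeMonoid.toList w).insertIdx (i - 1) (0 : Fin 3)))

/-- d_i on Ω⊠Ω : d_i(x⊠y) = d_i x ⊠ d_i y. -/
def diP2 (i : ℕ) : P2 →ₗ[ℝ] P2 :=
  Finsupp.lmapDomain ℝ ℝ
    (fun p : Word × Word =>
      (FreeMonoid.ofList ((FreeMonoid.toList p.1).insertIdx (i - 1) (0 : Fin 3)),
       FreeMonoid.ofList ((FreeMonoid.toList p.2).insertIdx (i - 1) (0 : Fin 3))))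

/-- the bidegree (k, -j) piece of Ω : words of length k−1 with j occurrences of b. -/
def Gr1 (k j : ℕ) : Set Om :=
  {f | ∃ w : Word, (FreeMonoid.toList w).length + 1 = k ∧ bcount w = j ∧ f = W w}

/-- the bidegree (k, -j) piece of Ω⊠Ω. -/
def Gr2 (k j : ℕ) : Set P2 :=
  {f | ∃ p : Word × Word, (FreeMonoid.toList p.1).length + 1 = k ∧
    (FreeMonoid.toList p.2).length + 1 = k ∧ bcount p.1 + bcount p.2 = j ∧
    f = Finsupp.single p 1}

/-- the signed flip τ(x⊠y) = (−1)^{l(x)l(y)} y⊠x. -/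
def flipP2 (f : P2) : P2 :=
  f.sum fun p r =>
    (((-1 : ℝ) ^ (bcount p.1 * bcount p.2)) * r) • Finsupp.single (p.2, p.1) (1 : ℝ)

def Bel : P2 := W2 bW aW + W2 cW bW
def Ael : P2 := W2 bW cW + W2 aW bW - W2 bW aW - W2 cW bW

/-
Applying d₁ and ∘ to the unit forces Δ(a) = a⊠a and Δ(c) = c⊠c. By the bigrading, Δ(b) is a
combination of b⊠a, b⊠c, a⊠b, c⊠b, and ∂Δ(b) = Δ(c) − Δ(a) = c⊠c − a⊠a cuts this down to the
line B + tA. The flip exchanges the coefficient t of a⊠b with the coefficient 1 − t of b⊠a, so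
symmetry forces t = ½. For Δ(b) = ½(b⊠a + b⊠c + a⊠b + c⊠b) the coefficient of b⊠c⊠a is ¼ in
(Δ⊠id)Δ(b) but 0 in (id⊠Δ)Δ(b).
-/

instance : DecidableEq Word := inferInstanceAs (DecidableEq (List (Fin 3)))

@[simp] lemma bcount_aW : bcount aW = 0 := rfl
@[simp] lemma bcount_bW : bcount bW = 1 := rfl
@[simp] lemma bcount_cW : bcount cW = 0 := rfl

lemma tmul_single (p q : Word × Word) (r s : ℝ) :
    tmul (Finsupp.single p r) (Finsupp.single q s) =
      Finsupp.single (p.1 * q.1, p.2 * q.2) (r * s * (-1) ^ (bcount p.2 * bcount q.1)) := by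
  simp [tmul]

lemma apply_W_cW {Δ : Om →ₗ[ℝ] P2} (hunit : Δ (W 1) = W2 1 1)
    (hcomp : ∀ f g : Om, Δ (f * W cW * g) = tmul (Δ f) (tmul (W2 cW cW) (Δ g))) :
    Δ (W cW) = W2 cW cW := by
  have h := hcomp (W 1) (W 1)
  simp only [W, MonoidAlgebra.single_mul_single, one_mul, mul_one] at h
  rw [W, h, ← W, hunit]
  simp [W2, tmul_single]

lemma apply_W_aW {Δ : Om →ₗ[ℝ] P2} (hunit : Δ (W 1) = W2 1 1)
    (hdi : ∀ (i : ℕ) (f : Om), 1 ≤ i → Δ (diOm i f) = diP2 i (Δ f)) :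
    Δ (W aW) = W2 aW aW := by
  have hd1 : diOm 1 (W 1) = W aW := by simp [diOm, W, aW]
  have hd2 : diP2 1 (W2 1 1) = W2 aW aW := by simp [diP2, W2, aW]
  simpa [hd1, hunit, hd2] using hdi 1 (W 1) le_rfl

lemma eq_aW_or_eq_bW_or_eq_cW {w : Word} (h : (FreeMonoid.toList w).length = 1) :
    w = aW ∨ w = bW ∨ w = cW := by
  obtain ⟨x, hx⟩ := List.length_eq_one_iff.mp h
  obtain rfl : w = FreeMonoid.ofList [x] := by rw [← hx, FreeMonoid.ofList_toList]
  fin_cases x <;> simp [aW, bW, cW]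

def bPairs : Set (Word × Word) := {(bW, aW), (bW, cW), (aW, bW), (cW, bW)}

lemma span_Gr2_two_one_le_supported :
    Submodule.span ℝ (Gr2 2 1) ≤ Finsupp.supported ℝ ℝ bPairs := by
  refine Submodule.span_le.2 ?_
  rintro f ⟨⟨w, w'⟩, hw, hw', hb, rfl⟩
  dsimp only at hw hw' hb
  have hl : (FreeMonoid.toList w).length = 1 := by omega
  have hl' : (FreeMonoid.toList w').length = 1 := by omega
  apply Finsupp.single_mem_supported
  rcases eq_aW_or_eq_bW_or_eq_cW hl with rfl | rfl | rfl <;>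
    rcases eq_aW_or_eq_bW_or_eq_cW hl' with rfl | rfl | rfl <;>
    first | exact absurd hb (by decide) | simp [bPairs]

lemma eq_of_mem_supported_bPairs {x : P2} (hx : x ∈ Finsupp.supported ℝ ℝ bPairs) :
    x = x (bW, aW) • W2 bW aW + x (bW, cW) • W2 bW cW + x (aW, bW) • W2 aW bW
      + x (cW, bW) • W2 cW bW := by
  ext q
  by_cases hq : q ∈ bPairs
  · simp only [bPairs, Set.mem_insert_iff, Set.mem_singleton_iff] at hq
    rcases hq with rfl | rfl | rfl | rfl <;> simp +decide [W2]
  · rw [(Finsupp.mem_supported' ℝ x).1 hx q hq]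
    simp only [bPairs, Set.mem_insert_iff, Set.mem_singleton_iff, not_or] at hq
    simp [W2, Ne.symm hq.1, Ne.symm hq.2.1, Ne.symm hq.2.2.1, Ne.symm hq.2.2.2]

lemma exists_eq_Bel_add_smul_Ael {D1 : Om →ₗ[ℝ] Om} {D2 : P2 →ₗ[ℝ] P2}
    (ha : D1 (W aW) = 0) (hc : D1 (W cW) = 0) (hb : D1 (W bW) = W cW - W aW)
    (hD2 : ∀ w w' : Word,
      D2 (W2 w w') = Finsupp.mapDomain (fun u : Word => (u, w')) (D1 (W w)).coeff
        + ((-1 : ℝ) ^ (bcount w)) • Finsupp.mapDomain (fun u : Word => (w, u)) (D1 (W w')).coeff)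
    {x : P2} (hx : x ∈ Finsupp.supported ℝ ℝ bPairs) (hDx : D2 x = W2 cW cW - W2 aW aW) :
    ∃ t : ℝ, x = Bel + t • Ael := by
  have hD2x : D2 x = x (bW, aW) • (W2 cW aW - W2 aW aW) + x (bW, cW) • (W2 cW cW - W2 aW cW)
      + x (aW, bW) • (W2 aW cW - W2 aW aW) + x (cW, bW) • (W2 cW cW - W2 cW aW) := by
    conv_lhs => rw [eq_of_mem_supported_bPairs hx]
    simp only [map_add, map_smul, hD2, ha, hb, hc]
    simp [W, W2, Finsupp.mapDomain_sub]
  rw [hD2x] at hDx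
  have hca := DFunLike.congr_fun hDx (cW, aW)
  have haa := DFunLike.congr_fun hDx (aW, aW)
  have hac := DFunLike.congr_fun hDx (aW, cW)
  simp +decide only [W2, Finsupp.coe_add, Finsupp.coe_sub, Finsupp.coe_smul, Pi.add_apply,
    Pi.sub_apply, Pi.smul_apply, Finsupp.single_apply, smul_eq_mul, ite_true, ite_false]
    at hca haa hac
  refine ⟨x (aW, bW), ?_⟩
  conv_lhs => rw [eq_of_mem_supported_bPairs hx]
  rw [show x (bW, aW) = 1 - x (aW, bW) by linarith,
    show x (bW, cW) = x (aW, bW) by linarith, show x (cW, bW) = 1 - x (aW, bW) by linarith,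
    Bel, Ael]
  module

lemma flipP2_apply (f : P2) (x y : Word) :
    flipP2 f (x, y) = (-1) ^ (bcount y * bcount x) * f (y, x) := by
  rw [flipP2, Finsupp.sum_apply, Finsupp.sum_eq_single (y, x)]
  · simp
  · rintro ⟨u, v⟩ _ hp
    rw [Finsupp.smul_apply, Finsupp.single_apply, if_neg, smul_zero]
    rintro ⟨⟩
    exact hp rfl
  · simp

lemma eq_half_of_flipP2_Bel_add_smul_Ael {t : ℝ}
    (h : flipP2 (Bel + t • Ael) = Bel + t • Ael) : t = 1 / 2 := by
  have hab := flipP2_apply (Bel + t • Ael) aW bW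
  rw [h] at hab
  simp +decide only [Bel, Ael, W2, Finsupp.coe_add, Finsupp.coe_sub, Finsupp.coe_smul,
    Pi.add_apply, Pi.sub_apply, Pi.smul_apply, Finsupp.single_apply, smul_eq_mul, ite_true,
    ite_false, bcount_aW, bcount_bW, mul_zero, pow_zero, one_mul] at hab
  linarith

def rTensorP2 (Δ : Om →ₗ[ℝ] P2) (x : P2) : T3 :=
  x.sum fun p r => r • ((Δ (W p.1)).sum fun q s => Finsupp.single (q.1, q.2, p.2) s)

def lTensorP2 (Δ : Om →ₗ[ℝ] P2) (x : P2) : T3 :=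
  x.sum fun p r => r • ((Δ (W p.2)).sum fun q s => Finsupp.single (p.1, q.1, q.2) s)

lemma rTensorP2_eq_linearCombination (Δ : Om →ₗ[ℝ] P2) (x : P2) :
    rTensorP2 Δ x = Finsupp.linearCombination ℝ
      (fun p => Finsupp.mapDomain (fun q : Word × Word => (q.1, q.2, p.2)) (Δ (W p.1))) x := by
  rw [Finsupp.linearCombination_apply]
  rfl

lemma lTensorP2_eq_linearCombination (Δ : Om →ₗ[ℝ] P2) (x : P2) :
    lTensorP2 Δ x = Finsupp.linearCombination ℝ
      (fun p => Finsupp.mapDomain (fun q : Word × Word => (p.1, q.1, q.2)) (Δ (W p.2))) x := by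
  rw [Finsupp.linearCombination_apply]
  rfl

lemma rTensorP2_ne_lTensorP2 {Δ : Om →ₗ[ℝ] P2} (ha : Δ (W aW) = W2 aW aW)
    (hc : Δ (W cW) = W2 cW cW) (hb : Δ (W bW) = Bel + (1 / 2 : ℝ) • Ael) :
    rTensorP2 Δ (Δ (W bW)) ≠ lTensorP2 Δ (Δ (W bW)) := by
  intro h
  have hbca := DFunLike.congr_fun h (bW, cW, aW)
  norm_num +decide [rTensorP2_eq_linearCombination, lTensorP2_eq_linearCombination, ha, hb, hc, Bel,
    Ael, W2, Finsupp.mapDomain_add, Finsupp.mapDomain_sub, Finsupp.mapDomain_smul] at hbca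

theorem stmt15_general
    -- ∂ on Ω:
    (D1 : Om →ₗ[ℝ] Om)
    (ha : D1 (W aW) = 0) (hc : D1 (W cW) = 0) (hb : D1 (W bW) = W cW - W aW)
    -- ∂ on Ω⊠Ω :
    (D2 : P2 →ₗ[ℝ] P2)
    (hD2 : ∀ w w' : Word,
      D2 (W2 w w') = Finsupp.mapDomain (fun u : Word => (u, w')) (D1 (W w)).coeff
        + ((-1 : ℝ) ^ (bcount w)) • Finsupp.mapDomain (fun u : Word => (w, u)) (D1 (W w')).coeff)
    -- Δ : Ω → Ω⊠Ω a morphism of DB-algebras with Δ(e) = e⊠e :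
    (Δ : Om →ₗ[ℝ] P2)
    (hunit : Δ (W 1) = W2 1 1)
    (hgrade : ∀ k j : ℕ, ∀ f ∈ Submodule.span ℝ (Gr1 k j),
      Δ f ∈ Submodule.span ℝ (Gr2 k j))
    (hcomp : ∀ f g : Om, Δ (f * W cW * g) = tmul (Δ f) (tmul (W2 cW cW) (Δ g)))
    (hpartial : ∀ f : Om, Δ (D1 f) = D2 (Δ f))
    (hdi : ∀ (i : ℕ) (f : Om), 1 ≤ i → Δ (diOm i f) = diP2 i (Δ f)) :
    -- if Δ is symmetric then Δ(b) = B + ½A: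
    ((∀ f : Om, flipP2 (Δ f) = Δ f) → Δ (W bW) = Bel + (1 / 2 : ℝ) • Ael) ∧
    -- and Δ cannot be simultaneously symmetric and coassociative:
    ¬ ((∀ f : Om, flipP2 (Δ f) = Δ f) ∧
        (∀ f : Om,
          -- (Δ ⊠ id) (Δ f) = (id ⊠ Δ) (Δ f) :
          ((Δ f).sum fun p r =>
            r • ((Δ (W p.1)).sum fun q s => Finsupp.single (q.1, q.2, p.2) s))
          = ((Δ f).sum fun p r =>
            r • ((Δ (W p.2)).sum fun q s => Finsupp.single (p.1, q.1, q.2) s)))) := by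
  have hΔa := apply_W_aW hunit hdi
  have hΔc := apply_W_cW hunit hcomp
  have hsupp : Δ (W bW) ∈ Finsupp.supported ℝ ℝ bPairs :=
    span_Gr2_two_one_le_supported (hgrade 2 1 _ (Submodule.subset_span ⟨bW, rfl, rfl, rfl⟩))
  have hDΔb : D2 (Δ (W bW)) = W2 cW cW - W2 aW aW := by
    rw [← hpartial, hb, map_sub, hΔc, hΔa]
  obtain ⟨t, ht⟩ := exists_eq_Bel_add_smul_Ael ha hc hb hD2 hsupp hDΔb
  have hsymm : (∀ f : Om, flipP2 (Δ f) = Δ f) → Δ (W bW) = Bel + (1 / 2 : ℝ) • Ael := by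
    intro hflip
    have hflipb := hflip (W bW)
    rw [ht] at hflipb ⊢
    rw [eq_half_of_flipP2_Bel_add_smul_Ael hflipb]
  exact ⟨hsymm, fun ⟨hflip, hcoassoc⟩ =>
    rTensorP2_ne_lTensorP2 hΔa hΔc (hsymm hflip) (hcoassoc (W bW))⟩

theorem stmt15
    -- ∂ on Ω:
    (D1 : Om →ₗ[ℝ] Om)
    (ha : D1 (W aW) = 0) (hc : D1 (W cW) = 0) (hb : D1 (W bW) = W cW - W aW)
    (hleib : ∀ w w' : Word,
      D1 (W (w * w')) = D1 (W w) * W w' + ((-1 : ℝ) ^ (bcount w)) • (W w * D1 (W w')))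
    -- ∂ on Ω⊠Ω :
    (D2 : P2 →ₗ[ℝ] P2)
    (hD2 : ∀ w w' : Word,
      D2 (W2 w w') = Finsupp.mapDomain (fun u : Word => (u, w')) (D1 (W w)).coeff
        + ((-1 : ℝ) ^ (bcount w)) • Finsupp.mapDomain (fun u : Word => (w, u)) (D1 (W w')).coeff)
    -- Δ : Ω → Ω⊠Ω a morphism of DB-algebras with Δ(e) = e⊠e :
    (Δ : Om →ₗ[ℝ] P2)
    (hunit : Δ (W 1) = W2 1 1)
    (hgrade : ∀ k j : ℕ, ∀ f ∈ Submodule.span ℝ (Gr1 k j),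
      Δ f ∈ Submodule.span ℝ (Gr2 k j))
    (hcomp : ∀ f g : Om, Δ (f * W cW * g) = tmul (Δ f) (tmul (W2 cW cW) (Δ g)))
    (hpartial : ∀ f : Om, Δ (D1 f) = D2 (Δ f))
    (hdi : ∀ (i : ℕ) (f : Om), 1 ≤ i → Δ (diOm i f) = diP2 i (Δ f)) :
    -- if Δ is symmetric then Δ(b) = B + ½A:
    ((∀ f : Om, flipP2 (Δ f) = Δ f) → Δ (W bW) = Bel + (1 / 2 : ℝ) • Ael) ∧
    -- and Δ cannot be simultaneously symmetric and coassociative: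
    ¬ ((∀ f : Om, flipP2 (Δ f) = Δ f) ∧
        (∀ f : Om,
          -- (Δ ⊠ id) (Δ f) = (id ⊠ Δ) (Δ f) :
          ((Δ f).sum fun p r =>
            r • ((Δ (W p.1)).sum fun q s => Finsupp.single (q.1, q.2, p.2) s))
          = ((Δ f).sum fun p r =>
            r • ((Δ (W p.2)).sum fun q s => Finsupp.single (p.1, q.1, q.2) s)))) :=
  stmt15_general D1 ha hc hb D2 hD2 Δ hunit hgrade hcomp hpartial hdi

end
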